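/- arXiv:2501.01523 — 4 statements merged into one kernel-verified Lean document; each statement's English description precedes it below -/
import Mathlib

section
/- Let R₀ > r₀ > 0, let D = (r₀, R₁) × ℝ × (Z_a, Z_b) be an open box in (R, φ, Z)-coordinates with base point (R₀, Z₀) satisfying r₀ < R₀ < R₁ and Z_a < Z₀ < Z_b, and let B_R, B_φ, B_Z : D → ℝ be C¹ functions satisfying the cylindrical divergence-free identity ∂(R·B_R)/∂R + ∂B_φ/∂φ + R·∂B_Z/∂Z = 0 on D. Define ψ(R, φ, Z) = −∫_{Z₀}^{Z} R·B_R(R, φ, Z′) dZ′ + ∫_{R₀}^{R} R′·B_Z(R′, φ, Z₀) dR′ and χ(R, φ, Z) = ∫_{Z₀}^{Z} R·B_φ(R, φ, Z′) dZ′. Then for every (R, φ, Z) ∈ D one has B_R(R, φ, Z) = −(1/R)·∂ψ/∂Z, B_φ(R, φ, Z) = (1/R)·∂χ/∂Z, and B_Z(R, φ, Z) = (1/R)·∂ψ/∂R − (1/R²)·∂χ/∂φ. -/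
open Set Function MeasureTheory Metric

/-! The potentials are integrals in `Z` from the base plane `Z = Z₀`, so the fundamental theorem
of calculus gives `∂ψ/∂Z = -R B_R` and `∂χ/∂Z = R B_φ` directly. For `B_Z`, differentiate under
the integral sign in `R` and `φ`: the divergence-free identity turns `∫ ∂_R(R B_R) dZ` into
`-∫ ∂_φ B_φ dZ - R (B_Z(Z) - B_Z(Z₀))`, the first term is `-(1/R) ∂χ/∂φ`, and the boundary value
`R B_Z(Z₀)` cancels against the derivative of the `R`-integral along the base plane. -/

theorem ContinuousOn.comp_prodMk_right {α β γ : Type*} [TopologicalSpace α]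
    [TopologicalSpace β] [TopologicalSpace γ] {g : α × β → γ} {U : Set (α × β)}
    (hg : ContinuousOn g U) {x : α} {s : Set β} (hs : ∀ t ∈ s, (x, t) ∈ U) :
    ContinuousOn (fun t => g (x, t)) s :=
  hg.comp (Continuous.prodMk_right x).continuousOn hs

section PartialDerivatives

variable {E : Type*} [NormedAddCommGroup E] [NormedSpace ℝ E]
  {f : ℝ → ℝ → E} {U : Set (ℝ × ℝ)}

namespace ContDiffOn

theorem hasDerivAt_uncurry_left (hU : IsOpen U) (hf : ContDiffOn ℝ 1 (uncurry f) U)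
    {x t : ℝ} (h : (x, t) ∈ U) :
    HasDerivAt (fun y => f y t) (fderiv ℝ (uncurry f) (x, t) (1, 0)) x :=
  ((hf.differentiableOn one_ne_zero).differentiableAt (hU.mem_nhds h)).hasFDerivAt.comp_hasDerivAt
    (f := fun y => (y, t)) x ((hasDerivAt_id x).prodMk (hasDerivAt_const x t))

theorem continuousOn_deriv_uncurry_left (hU : IsOpen U) (hf : ContDiffOn ℝ 1 (uncurry f) U) :
    ContinuousOn (fun p : ℝ × ℝ => deriv (fun y => f y p.2) p.1) U :=
  ((ContinuousLinearMap.apply ℝ E ((1 : ℝ), (0 : ℝ))).continuous.comp_continuousOn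
    (hf.continuousOn_fderiv_of_isOpen hU le_rfl)).congr
    fun _ hp => (hf.hasDerivAt_uncurry_left hU hp).deriv

theorem hasDerivAt_uncurry_right (hU : IsOpen U) (hf : ContDiffOn ℝ 1 (uncurry f) U)
    {x t : ℝ} (h : (x, t) ∈ U) :
    HasDerivAt (f x) (fderiv ℝ (uncurry f) (x, t) (0, 1)) t :=
  ((hf.differentiableOn one_ne_zero).differentiableAt (hU.mem_nhds h)).hasFDerivAt.comp_hasDerivAt
    (f := fun s => (x, s)) t ((hasDerivAt_const t x).prodMk (hasDerivAt_id t))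

theorem continuousOn_deriv_uncurry_right (hU : IsOpen U) (hf : ContDiffOn ℝ 1 (uncurry f) U) :
    ContinuousOn (fun p : ℝ × ℝ => deriv (f p.1) p.2) U :=
  ((ContinuousLinearMap.apply ℝ E ((0 : ℝ), (1 : ℝ))).continuous.comp_continuousOn
    (hf.continuousOn_fderiv_of_isOpen hU le_rfl)).congr
    fun _ hp => (hf.hasDerivAt_uncurry_right hU hp).deriv

end ContDiffOn

namespace intervalIntegral

theorem integral_hasDerivAt_right_of_continuousOn [CompleteSpace E] {g : ℝ → E} {s : Set ℝ}
    (hs : IsOpen s) (hg : ContinuousOn g s) {a b : ℝ} (hab : uIcc a b ⊆ s) :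
    HasDerivAt (fun u => ∫ t in a..u, g t) (g b) b :=
  integral_hasDerivAt_right (hg.mono hab).intervalIntegrable
    (hg.stronglyMeasurableAtFilter hs b (hab right_mem_uIcc))
    (hg.continuousAt (hs.mem_nhds (hab right_mem_uIcc)))

-- The compact segment `{x} × [a, b]` has a closed thickening inside `U`, on which the partial
-- derivative is bounded: this bound dominates the difference quotients.
theorem hasDerivAt_integral_of_contDiffOn (hU : IsOpen U) (hf : ContDiffOn ℝ 1 (uncurry f) U)
    {x a b : ℝ} (hx : ∀ t ∈ uIcc a b, (x, t) ∈ U) :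
    HasDerivAt (fun y => ∫ t in a..b, f y t) (∫ t in a..b, deriv (fun y => f y t) x) x := by
  have hxU : {x} ×ˢ uIcc a b ⊆ U := by
    rintro ⟨_, t⟩ ⟨rfl, ht⟩
    exact hx t ht
  obtain ⟨δ, hδ, hδU⟩ := (isCompact_singleton.prod isCompact_uIcc).exists_cthickening_subset_open
    hU hxU
  have hK : closedBall x δ ×ˢ uIcc a b ⊆ U := fun p ⟨hp₁, hp₂⟩ =>
    hδU <| mem_cthickening_of_dist_le p (x, p.2) δ _ ⟨rfl, hp₂⟩ <| by
      simpa [Prod.dist_eq, hδ.le] using hp₁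
  have hslice : ∀ y ∈ closedBall x δ, ∀ t ∈ uIcc a b, (y, t) ∈ U :=
    fun y hy t ht => hK ⟨hy, ht⟩
  have hf' := hf.continuousOn_deriv_uncurry_left hU
  obtain ⟨C, hC⟩ :=
    (isCompact_closedBall x δ |>.prod isCompact_uIcc).exists_bound_of_continuousOn (hf'.mono hK)
  have hxδ : x ∈ closedBall x δ := mem_closedBall_self hδ.le
  refine (hasDerivAt_integral_of_dominated_loc_of_deriv_le (F := f)
    (F' := fun y t => deriv (fun y => f y t) y) (bound := fun _ => C)
    (closedBall_mem_nhds x hδ) ?_ ?_ ?_ ?_ intervalIntegrable_const ?_).2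
  · filter_upwards [closedBall_mem_nhds x hδ] with y hy
    exact ((hf.continuousOn.comp_prodMk_right (hslice y hy)).mono uIoc_subset_uIcc)
      |>.aestronglyMeasurable measurableSet_uIoc
  · exact (hf.continuousOn.comp_prodMk_right hx).intervalIntegrable
  · exact ((hf'.comp_prodMk_right (hslice x hxδ)).mono uIoc_subset_uIcc).aestronglyMeasurable
      measurableSet_uIoc
  · exact .of_forall fun t ht y hy => hC (y, t) ⟨hy, uIoc_subset_uIcc ht⟩
  · exact .of_forall fun t ht y hy => (hf.hasDerivAt_uncurry_left hU
      (hslice y hy t (uIoc_subset_uIcc ht))).differentiableAt.hasDerivAt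

end intervalIntegral

end PartialDerivatives

-- The paper's `ψ = R A_φ` and `χ = R A_R` for the vector potential `A` in the gauge `A_Z = 0`.
noncomputable def toroidalPotential (R₀ Z₀ : ℝ) (BR BZ : ℝ → ℝ → ℝ → ℝ) (R φ Z : ℝ) : ℝ :=
  -(∫ z' in Z₀..Z, R * BR R φ z') + ∫ r' in R₀..R, r' * BZ r' φ Z₀

noncomputable def radialPotential (Z₀ : ℝ) (Bφ : ℝ → ℝ → ℝ → ℝ) (R φ Z : ℝ) : ℝ :=
  ∫ z' in Z₀..Z, R * Bφ R φ z'

def CylindricalDivergenceFreeOn (D : Set (ℝ × ℝ × ℝ)) (BR Bφ BZ : ℝ → ℝ → ℝ → ℝ) : Prop :=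
  ∀ R φ Z : ℝ, (R, φ, Z) ∈ D →
    deriv (fun R' => R' * BR R' φ Z) R + deriv (fun φ' => Bφ R φ' Z) φ
      + R * deriv (fun Z' => BZ R φ Z') Z = 0

section Potentials

variable {D : Set (ℝ × ℝ × ℝ)} {BR Bφ BZ : ℝ → ℝ → ℝ → ℝ} {R₀ Z₀ R φ Z : ℝ}

theorem hasDerivAt_toroidalPotential_Z (hD : IsOpen D)
    (hBR : ContinuousOn (fun p : ℝ × ℝ × ℝ => BR p.1 p.2.1 p.2.2) D)
    (hseg : ∀ t ∈ uIcc Z₀ Z, (R, φ, t) ∈ D) :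
    HasDerivAt (fun Z' => toroidalPotential R₀ Z₀ BR BZ R φ Z') (-(R * BR R φ Z)) Z :=
  (intervalIntegral.integral_hasDerivAt_right_of_continuousOn (hD.preimage (by fun_prop))
    (continuousOn_const.mul (hBR.comp (Continuous.continuousOn (by fun_prop)) fun _ h => h))
    hseg).neg.add_const _

theorem hasDerivAt_radialPotential_Z (hD : IsOpen D)
    (hBφ : ContinuousOn (fun p : ℝ × ℝ × ℝ => Bφ p.1 p.2.1 p.2.2) D)
    (hseg : ∀ t ∈ uIcc Z₀ Z, (R, φ, t) ∈ D) :
    HasDerivAt (fun Z' => radialPotential Z₀ Bφ R φ Z') (R * Bφ R φ Z) Z :=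
  intervalIntegral.integral_hasDerivAt_right_of_continuousOn (hD.preimage (by fun_prop))
    (continuousOn_const.mul (hBφ.comp (Continuous.continuousOn (by fun_prop)) fun _ h => h)) hseg

theorem hasDerivAt_toroidalPotential_R (hD : IsOpen D)
    (hBR : ContDiffOn ℝ 1 (fun p : ℝ × ℝ × ℝ => BR p.1 p.2.1 p.2.2) D)
    (hBZ : ContinuousOn (fun p : ℝ × ℝ × ℝ => BZ p.1 p.2.1 p.2.2) D)
    (hseg : ∀ t ∈ uIcc Z₀ Z, (R, φ, t) ∈ D) (hbase : ∀ r ∈ uIcc R₀ R, (r, φ, Z₀) ∈ D) :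
    HasDerivAt (fun R' => toroidalPotential R₀ Z₀ BR BZ R' φ Z)
      (-(∫ t in Z₀..Z, deriv (fun R' => R' * BR R' φ t) R) + R * BZ R φ Z₀) R := by
  have hRBR : ContDiffOn ℝ 1 (uncurry fun y t => y * BR y φ t) {p | (p.1, φ, p.2) ∈ D} :=
    contDiffOn_fst.mul <| hBR.comp (f := fun p : ℝ × ℝ => (p.1, φ, p.2)) (by fun_prop) fun _ h => h
  exact (intervalIntegral.hasDerivAt_integral_of_contDiffOn (hD.preimage (by fun_prop)) hRBR
    hseg).neg.add <| intervalIntegral.integral_hasDerivAt_right_of_continuousOn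
      (hD.preimage (by fun_prop))
      (continuousOn_id.mul (hBZ.comp (Continuous.continuousOn (by fun_prop)) fun _ h => h)) hbase

theorem hasDerivAt_radialPotential_φ (hD : IsOpen D)
    (hBφ : ContDiffOn ℝ 1 (fun p : ℝ × ℝ × ℝ => Bφ p.1 p.2.1 p.2.2) D)
    (hseg : ∀ t ∈ uIcc Z₀ Z, (R, φ, t) ∈ D) :
    HasDerivAt (fun φ' => radialPotential Z₀ Bφ R φ' Z)
      (R * ∫ t in Z₀..Z, deriv (fun φ' => Bφ R φ' t) φ) φ := by
  simp only [radialPotential, intervalIntegral.integral_const_mul]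
  have hBφ' : ContDiffOn ℝ 1 (uncurry fun y t => Bφ R y t) {p | (R, p.1, p.2) ∈ D} :=
    hBφ.comp (f := fun p : ℝ × ℝ => (R, p.1, p.2)) (by fun_prop) fun _ h => h
  exact (intervalIntegral.hasDerivAt_integral_of_contDiffOn (hD.preimage (by fun_prop)) hBφ'
    hseg).const_mul R

theorem CylindricalDivergenceFreeOn.integral_deriv_radial_eq
    (hdiv : CylindricalDivergenceFreeOn D BR Bφ BZ) (hD : IsOpen D)
    (hBφ : ContDiffOn ℝ 1 (fun p : ℝ × ℝ × ℝ => Bφ p.1 p.2.1 p.2.2) D)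
    (hBZ : ContDiffOn ℝ 1 (fun p : ℝ × ℝ × ℝ => BZ p.1 p.2.1 p.2.2) D)
    (hseg : ∀ t ∈ uIcc Z₀ Z, (R, φ, t) ∈ D) :
    ∫ t in Z₀..Z, deriv (fun R' => R' * BR R' φ t) R
      = -(∫ t in Z₀..Z, deriv (fun φ' => Bφ R φ' t) φ) - R * (BZ R φ Z - BZ R φ Z₀) := by
  have hU : IsOpen {p : ℝ × ℝ | (R, p.1, p.2) ∈ D} := hD.preimage (by fun_prop)
  have hBφ' : ContDiffOn ℝ 1 (uncurry fun y t => Bφ R y t) {p | (R, p.1, p.2) ∈ D} :=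
    hBφ.comp (f := fun p : ℝ × ℝ => (R, p.1, p.2)) (by fun_prop) fun _ h => h
  have hBZ' : ContDiffOn ℝ 1 (uncurry fun y t => BZ R y t) {p | (R, p.1, p.2) ∈ D} :=
    hBZ.comp (f := fun p : ℝ × ℝ => (R, p.1, p.2)) (by fun_prop) fun _ h => h
  have hFTC : ∫ t in Z₀..Z, deriv (fun Z' => BZ R φ Z') t = BZ R φ Z - BZ R φ Z₀ :=
    intervalIntegral.integral_deriv_eq_sub
      (fun t ht => (hBZ'.hasDerivAt_uncurry_right hU (hseg t ht)).differentiableAt)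
      ((hBZ'.continuousOn_deriv_uncurry_right hU).comp_prodMk_right hseg).intervalIntegrable
  have hint : IntervalIntegrable (fun t => deriv (fun φ' => Bφ R φ' t) φ) volume Z₀ Z :=
    ((hBφ'.continuousOn_deriv_uncurry_left hU).comp_prodMk_right hseg).intervalIntegrable
  have hint' : IntervalIntegrable (fun t => R * deriv (fun Z' => BZ R φ Z') t) volume Z₀ Z :=
    ((hBZ'.continuousOn_deriv_uncurry_right hU).comp_prodMk_right hseg
      |>.intervalIntegrable).const_mul R
  have hpointwise : ∀ t ∈ uIcc Z₀ Z, deriv (fun R' => R' * BR R' φ t) R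
      = -deriv (fun φ' => Bφ R φ' t) φ - R * deriv (fun Z' => BZ R φ Z') t := fun t ht => by
    linarith [hdiv R φ t (hseg t ht)]
  rw [intervalIntegral.integral_congr hpointwise,
    intervalIntegral.integral_sub (f := fun t => -deriv (fun φ' => Bφ R φ' t) φ) hint.neg hint',
    intervalIntegral.integral_neg, intervalIntegral.integral_const_mul, hFTC]

end Potentials

/-- Vector potential reconstruction recovers the divergence-free field.
For a C¹ field (B_R, B_φ, B_Z) on an open box D = (r₀, R₁) × ℝ × (Z_a, Z_b) (with
0 < r₀ < R₀ < R₁ and Z_a < Z₀ < Z_b) satisfying the cylindrical divergence-free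
identity, the potentials ψ, χ defined by the line-integral formulas satisfy
B_R = −(1/R)∂ψ/∂Z, B_φ = (1/R)∂χ/∂Z, B_Z = (1/R)∂ψ/∂R − (1/R²)∂χ/∂φ on D. -/
theorem vector_potential_reconstruction_recovers_field
    (r₀ R₀ R₁ Za Zb Z₀ : ℝ)
    (hr₀ : 0 < r₀) (hR₀ : r₀ < R₀) (hR₁ : R₀ < R₁)
    (hZa : Za < Z₀) (hZb : Z₀ < Zb)
    (D : Set (ℝ × ℝ × ℝ))
    (hD : D = Set.Ioo r₀ R₁ ×ˢ (Set.univ : Set ℝ) ×ˢ Set.Ioo Za Zb)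
    (BR Bφ BZ : ℝ → ℝ → ℝ → ℝ)
    (hBR : ContDiffOn ℝ 1 (fun p : ℝ × ℝ × ℝ => BR p.1 p.2.1 p.2.2) D)
    (hBφ : ContDiffOn ℝ 1 (fun p : ℝ × ℝ × ℝ => Bφ p.1 p.2.1 p.2.2) D)
    (hBZ : ContDiffOn ℝ 1 (fun p : ℝ × ℝ × ℝ => BZ p.1 p.2.1 p.2.2) D)
    (hdiv : ∀ R φ Z : ℝ, (R, φ, Z) ∈ D →
      deriv (fun R' => R' * BR R' φ Z) R
        + deriv (fun φ' => Bφ R φ' Z) φ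
        + R * deriv (fun Z' => BZ R φ Z') Z = 0)
    (ψ χ : ℝ → ℝ → ℝ → ℝ)
    (hψ : ∀ R φ Z : ℝ, ψ R φ Z
      = -(∫ z' in Z₀..Z, R * BR R φ z') + ∫ r' in R₀..R, r' * BZ r' φ Z₀)
    (hχ : ∀ R φ Z : ℝ, χ R φ Z = ∫ z' in Z₀..Z, R * Bφ R φ z') :
    ∀ R φ Z : ℝ, (R, φ, Z) ∈ D →
      BR R φ Z = -(1 / R) * deriv (fun Z' => ψ R φ Z') Z ∧
      Bφ R φ Z = (1 / R) * deriv (fun Z' => χ R φ Z') Z ∧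
      BZ R φ Z = (1 / R) * deriv (fun R' => ψ R' φ Z) R
        - (1 / R ^ 2) * deriv (fun φ' => χ R φ' Z) φ := by
  obtain rfl : ψ = toroidalPotential R₀ Z₀ BR BZ :=
    funext fun R => funext fun φ => funext (hψ R φ)
  obtain rfl : χ = radialPotential Z₀ Bφ := funext fun R => funext fun φ => funext (hχ R φ)
  have hDopen : IsOpen D := hD ▸ isOpen_Ioo.prod (isOpen_univ.prod isOpen_Ioo)
  rintro R φ Z hRφZ
  rw [hD] at hRφZ
  obtain ⟨hR, -, hZ⟩ := hRφZ
  have hR0 : R ≠ 0 := (hr₀.trans hR.1).ne'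
  have hseg : ∀ t ∈ uIcc Z₀ Z, (R, φ, t) ∈ D := fun t ht =>
    hD ▸ ⟨hR, trivial, ordConnected_Ioo.uIcc_subset ⟨hZa, hZb⟩ hZ ht⟩
  have hbase : ∀ r ∈ uIcc R₀ R, (r, φ, Z₀) ∈ D := fun r hr =>
    hD ▸ ⟨ordConnected_Ioo.uIcc_subset ⟨hR₀, hR₁⟩ hR hr, trivial, hZa, hZb⟩
  refine ⟨?_, ?_, ?_⟩
  · rw [(hasDerivAt_toroidalPotential_Z hDopen hBR.continuousOn hseg).deriv]
    field_simp
  · rw [(hasDerivAt_radialPotential_Z hDopen hBφ.continuousOn hseg).deriv]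
    field_simp
  · rw [(hasDerivAt_toroidalPotential_R hDopen hBR hBZ.continuousOn hseg hbase).deriv,
      (hasDerivAt_radialPotential_φ hDopen hBφ hseg).deriv,
      CylindricalDivergenceFreeOn.integral_deriv_radial_eq hdiv hDopen hBφ hBZ hseg]
    field_simp
    ring
end

section
/- Let a < b be real numbers, let m be a natural number, let f : ℝ → ℝ be (2m + 2)-times continuously differentiable on [a, b], and let p be the unique polynomial of degree at most 2m + 1 satisfying p^(l)(a) = f^(l)(a) and p^(l)(b) = f^(l)(b) for all 0 ≤ l ≤ m. Then for every x ∈ [a, b] there exists ξ ∈ [a, b] such that f(x) − p(x) = f^(2m+2)(ξ) / (2m + 2)! · ((x − a)(x − b))^(m+1). In particular, sup_{x ∈ [a,b]} |f(x) − p(x)| ≤ (sup_{ξ ∈ [a,b]} |f^(2m+2)(ξ)|) · (b − a)^(2m+2) / (4^(m+1) · (2m + 2)!). -/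
/-!
Given an interior point `x`, choose `K` so that `g = f - p - K ω`, with node polynomial
`ω(t) = ((t - a)(t - b))^(m+1)`, vanishes at `x`. Then `g, g', …, g^(m)` vanish at `a` and `b`, so
by Rolle's theorem each of these derivatives gains one more zero in `(a, b)` than the previous one,
and `g^(m+1)` has `m + 2` distinct zeros in `(a, b)`. Another `m + 1` applications of Rolle's
theorem leave a zero `ξ` of `g^(2m+2) = f^(2m+2) - K (2m+2)!`, which is the error formula. The
uniform bound follows from `|(x - a)(x - b)| ≤ (b - a)² / 4`.
-/

open Set Polynomial

section Smooth

variable {𝕜 : Type*} [NontriviallyNormedField 𝕜]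

theorem Polynomial.contDiff_eval (r : 𝕜[X]) (n : WithTop ℕ∞) :
    ContDiff 𝕜 n (fun t => r.eval t) :=
  contDiff_aeval r n

theorem Polynomial.iteratedDeriv_eval (r : 𝕜[X]) (l : ℕ) :
    iteratedDeriv l (fun t => r.eval t) = fun t => (derivative^[l] r).eval t := by
  induction l with
  | zero => simp
  | succ l ih =>
    ext t
    rw [iteratedDeriv_succ, ih, Polynomial.deriv, Function.iterate_succ_apply']

theorem Polynomial.iteratedDerivWithin_eval (r : 𝕜[X]) (l : ℕ) {s : Set 𝕜}
    (hs : UniqueDiffOn 𝕜 s) {x : 𝕜} (hx : x ∈ s) :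
    iteratedDerivWithin l (fun t => r.eval t) s x = (derivative^[l] r).eval x := by
  rw [iteratedDerivWithin_eq_iteratedDeriv hs (r.contDiff_eval l).contDiffAt hx,
    Polynomial.iteratedDeriv_eval]

theorem iteratedDerivWithin_sub_polynomial_eval {f : 𝕜 → 𝕜} {s : Set 𝕜} (hs : UniqueDiffOn 𝕜 s)
    {x : 𝕜} (hx : x ∈ s) {l : ℕ} (hf : ContDiffWithinAt 𝕜 l f s x) (r : 𝕜[X]) :
    iteratedDerivWithin l (fun t => f t - r.eval t) s x =
      iteratedDerivWithin l f s x - (derivative^[l] r).eval x := by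
  rw [← r.iteratedDerivWithin_eval l hs hx]
  exact iteratedDerivWithin_sub hx hs hf (r.contDiff_eval l).contDiffWithinAt

end Smooth

theorem Polynomial.eval_iterate_derivative_eq_zero_of_pow_dvd {R : Type*} [CommRing R]
    {q : R[X]} {t : R} {k l : ℕ} (hdvd : (X - C t) ^ k ∣ q) (hl : l < k) :
    (derivative^[l] q).eval t = 0 :=
  dvd_iff_isRoot.1 <| (dvd_pow_self _ (Nat.sub_ne_zero_of_lt hl)).trans
    (pow_sub_dvd_iterate_derivative_of_pow_dvd l hdvd)

theorem Polynomial.Monic.iterate_derivative_natDegree {R : Type*} [Semiring R] {q : R[X]}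
    (hq : q.Monic) : derivative^[q.natDegree] q = (q.natDegree.factorial : R[X]) := by
  rw [eq_C_of_natDegree_le_zero ((natDegree_iterate_derivative q _).trans (by simp)),
    coeff_iterate_derivative, zero_add, Nat.descFactorial_self, hq.coeff_natDegree]
  simp

section HermiteNode

variable {R : Type*} [CommRing R]

noncomputable def hermiteNode (a b : R) (m : ℕ) : R[X] := ((X - C a) * (X - C b)) ^ (m + 1)

theorem eval_hermiteNode (a b x : R) (m : ℕ) :
    (hermiteNode a b m).eval x = ((x - a) * (x - b)) ^ (m + 1) := by
  simp [hermiteNode]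

theorem eval_iterate_derivative_hermiteNode_left (a b : R) {l m : ℕ} (hl : l ≤ m) :
    (derivative^[l] (hermiteNode a b m)).eval a = 0 :=
  eval_iterate_derivative_eq_zero_of_pow_dvd (Dvd.intro _ (mul_pow _ _ _).symm) (by omega)

theorem eval_iterate_derivative_hermiteNode_right (a b : R) {l m : ℕ} (hl : l ≤ m) :
    (derivative^[l] (hermiteNode a b m)).eval b = 0 :=
  eval_iterate_derivative_eq_zero_of_pow_dvd (Dvd.intro_left _ (mul_pow _ _ _).symm) (by omega)

theorem iterate_derivative_hermiteNode [Nontrivial R] (a b : R) (m : ℕ) :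
    derivative^[2 * m + 2] (hermiteNode a b m) = ((2 * m + 2).factorial : R[X]) := by
  have hmonic : ((X - C a) * (X - C b)).Monic := (monic_X_sub_C a).mul (monic_X_sub_C b)
  have hdeg : (hermiteNode a b m).natDegree = 2 * m + 2 := by
    rw [hermiteNode, hmonic.natDegree_pow, (monic_X_sub_C a).natDegree_mul (monic_X_sub_C b),
      natDegree_X_sub_C, natDegree_X_sub_C]
    ring
  rw [← hdeg]
  exact (hmonic.pow (m + 1)).iterate_derivative_natDegree

end HermiteNode

theorem exists_finset_deriv_eq_zero {F : ℝ → ℝ} {a b : ℝ} (hF : ContinuousOn F (Icc a b))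
    {s : Finset ℝ} (hs : ↑s ⊆ Icc a b) (hzero : ∀ x ∈ s, F x = 0) :
    ∃ t : Finset ℝ, ↑t ⊆ Ioo a b ∧ (∀ z ∈ t, deriv F z = 0) ∧ s.card ≤ t.card + 1 := by
  have rolle (q : ℝ × ℝ) :
      ∃ z, q.1 ∈ s → q.2 ∈ s → q.1 < q.2 → z ∈ Ioo q.1 q.2 ∧ deriv F z = 0 := by
    by_cases h : q.1 ∈ s ∧ q.2 ∈ s ∧ q.1 < q.2
    · obtain ⟨hx, hy, hxy⟩ := h
      obtain ⟨z, hz, hz0⟩ := exists_deriv_eq_zero hxy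
        (hF.mono (Icc_subset_Icc (hs hx).1 (hs hy).2)) ((hzero _ hx).trans (hzero _ hy).symm)
      exact ⟨z, fun _ _ _ => ⟨hz, hz0⟩⟩
    · exact ⟨0, fun hx hy hxy => (h ⟨hx, hy, hxy⟩).elim⟩
  choose ζ hζ using rolle
  set pairs := (s ×ˢ s).filter fun q => q.1 < q.2
  have hζ' (q : ℝ × ℝ) (hq : q ∈ pairs) : ζ q ∈ Ioo q.1 q.2 ∧ deriv F (ζ q) = 0 := by
    simp only [pairs, Finset.mem_filter, Finset.mem_product] at hq
    exact hζ q hq.1.1 hq.1.2 hq.2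
  refine ⟨pairs.image ζ, ?_, ?_, ?_⟩
  · intro z hz
    obtain ⟨q, hq, rfl⟩ := Finset.mem_image.1 hz
    have hq' := Finset.mem_product.1 (Finset.mem_filter.1 hq).1
    exact ⟨(hs hq'.1).1.trans_lt (hζ' q hq).1.1, (hζ' q hq).1.2.trans_le (hs hq'.2).2⟩
  · simpa only [Finset.forall_mem_image] using fun q hq => (hζ' q hq).2
  · have hmem {x y : ℝ} (hx : x ∈ s) (hy : y ∈ s) (hxy : x < y) : (x, y) ∈ pairs := by
      simp [pairs, hx, hy, hxy]
    exact Finset.card_le_of_interleaved fun x hx y hy hxy _ =>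
      ⟨ζ (x, y), Finset.mem_image_of_mem _ (hmem hx hy hxy), (hζ' _ (hmem hx hy hxy)).1⟩

section Rolle

variable {g : ℝ → ℝ} {a b : ℝ} {n : ℕ}

theorem deriv_iteratedDerivWithin_Icc (j : ℕ) {z : ℝ} (hz : z ∈ Ioo a b) :
    deriv (iteratedDerivWithin j g (Icc a b)) z = iteratedDerivWithin (j + 1) g (Icc a b) z := by
  rw [iteratedDerivWithin_succ, derivWithin_of_mem_nhds (Icc_mem_nhds hz.1 hz.2)]

theorem exists_finset_iteratedDerivWithin_succ_eq_zero (hab : a < b)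
    (hg : ContDiffOn ℝ n g (Icc a b)) {j : ℕ} (hj : j ≤ n) {s : Finset ℝ} (hs : ↑s ⊆ Icc a b)
    (hzero : ∀ x ∈ s, iteratedDerivWithin j g (Icc a b) x = 0) :
    ∃ t : Finset ℝ, ↑t ⊆ Ioo a b ∧ (∀ z ∈ t, iteratedDerivWithin (j + 1) g (Icc a b) z = 0) ∧
      s.card ≤ t.card + 1 := by
  obtain ⟨t, hts, htzero, hcard⟩ := exists_finset_deriv_eq_zero
    (hg.continuousOn_iteratedDerivWithin (by exact_mod_cast hj) (uniqueDiffOn_Icc hab)) hs hzero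
  exact ⟨t, hts, fun z hz => deriv_iteratedDerivWithin_Icc j (hts hz) ▸ htzero z hz, hcard⟩

theorem exists_finset_iteratedDerivWithin_add_eq_zero (hab : a < b)
    (hg : ContDiffOn ℝ n g (Icc a b)) {j i : ℕ} (hji : j + i ≤ n) {s : Finset ℝ}
    (hs : ↑s ⊆ Icc a b) (hzero : ∀ x ∈ s, iteratedDerivWithin j g (Icc a b) x = 0) :
    ∃ t : Finset ℝ, ↑t ⊆ Icc a b ∧ (∀ z ∈ t, iteratedDerivWithin (j + i) g (Icc a b) z = 0) ∧
      s.card ≤ t.card + i := by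
  induction i with
  | zero => exact ⟨s, hs, hzero, le_rfl⟩
  | succ i ih =>
    obtain ⟨t, hts, htzero, hcard⟩ := ih (by omega)
    obtain ⟨u, hut, huzero, hcard'⟩ :=
      exists_finset_iteratedDerivWithin_succ_eq_zero hab hg (by omega) hts htzero
    exact ⟨u, hut.trans Ioo_subset_Icc_self, huzero, by omega⟩

theorem exists_iteratedDerivWithin_two_mul_add_two_eq_zero (hab : a < b) {m : ℕ}
    (hg : ContDiffOn ℝ (2 * m + 2 : ℕ) g (Icc a b))
    (hends : ∀ l ≤ m,
      iteratedDerivWithin l g (Icc a b) a = 0 ∧ iteratedDerivWithin l g (Icc a b) b = 0)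
    {x : ℝ} (hx : x ∈ Ioo a b) (hgx : g x = 0) :
    ∃ ξ ∈ Icc a b, iteratedDerivWithin (2 * m + 2) g (Icc a b) ξ = 0 := by
  have climb : ∀ j ≤ m + 1, ∃ t : Finset ℝ, ↑t ⊆ Ioo a b ∧
      (∀ z ∈ t, iteratedDerivWithin j g (Icc a b) z = 0) ∧ j + 1 ≤ t.card := by
    intro j hj
    induction j with
    | zero => exact ⟨{x}, by simpa using hx, by simpa using hgx, by simp⟩
    | succ j ih =>
      obtain ⟨t, hts, htzero, hcard⟩ := ih (by omega)
      have ha : a ∉ insert b t := by simpa [hab.ne] using fun h => lt_irrefl a (hts h).1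
      have hb : b ∉ t := fun h => lt_irrefl b (hts h).2
      obtain ⟨u, hus, huzero, hcard'⟩ := exists_finset_iteratedDerivWithin_succ_eq_zero
        (s := insert a (insert b t)) hab hg (by omega : j ≤ 2 * m + 2)
        (by simpa [insert_subset_iff, hab.le] using hts.trans Ioo_subset_Icc_self)
        (by simpa [hends j (by omega)] using htzero)
      rw [Finset.card_insert_of_notMem ha, Finset.card_insert_of_notMem hb] at hcard'
      exact ⟨u, hus, huzero, by omega⟩
  obtain ⟨t, hts, htzero, hcard⟩ := climb (m + 1) le_rfl
  obtain ⟨u, hus, huzero, hcard'⟩ := exists_finset_iteratedDerivWithin_add_eq_zero (i := m + 1)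
    hab hg (by omega) (hts.trans Ioo_subset_Icc_self) htzero
  obtain ⟨ξ, hξ⟩ := Finset.card_pos.1 (show 0 < u.card by omega)
  exact ⟨ξ, hus hξ, by simpa [two_mul, add_assoc, add_left_comm] using huzero ξ hξ⟩

end Rolle

theorem abs_sub_mul_sub_le_sq_div_four {a b x : ℝ} (hx : x ∈ Icc a b) :
    |(x - a) * (x - b)| ≤ (b - a) ^ 2 / 4 := by
  rw [abs_le]
  constructor <;> nlinarith [hx.1, hx.2, sq_nonneg (2 * x - a - b)]

section HermiteError

variable {a b : ℝ} {m : ℕ} {f : ℝ → ℝ} {p : ℝ[X]}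

theorem exists_hermite_error_eq_of_mem_Ioo (hab : a < b)
    (hf : ContDiffOn ℝ (2 * m + 2 : ℕ) f (Icc a b)) (hdeg : p.natDegree ≤ 2 * m + 1)
    (hmatch : ∀ l ≤ m, (derivative^[l] p).eval a = iteratedDerivWithin l f (Icc a b) a ∧
      (derivative^[l] p).eval b = iteratedDerivWithin l f (Icc a b) b)
    {x : ℝ} (hx : x ∈ Ioo a b) :
    ∃ ξ ∈ Icc a b, f x - p.eval x = iteratedDerivWithin (2 * m + 2) f (Icc a b) ξ /
      (2 * m + 2).factorial * ((x - a) * (x - b)) ^ (m + 1) := by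
  set ω := hermiteNode a b m
  have hωx : ω.eval x ≠ 0 := by
    rw [eval_hermiteNode]
    exact pow_ne_zero _ (mul_ne_zero (sub_ne_zero.2 hx.1.ne') (sub_ne_zero.2 hx.2.ne))
  set K := (f x - p.eval x) / ω.eval x
  set r := p + C K * ω
  have hr (l : ℕ) (y : ℝ) :
      (derivative^[l] r).eval y = (derivative^[l] p).eval y + K * (derivative^[l] ω).eval y := by
    simp [r, iterate_map_add, iterate_derivative_C_mul]
  have hg (l : ℕ) (hl : l ≤ 2 * m + 2) (y : ℝ) (hy : y ∈ Icc a b) :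
      iteratedDerivWithin l (fun t => f t - r.eval t) (Icc a b) y =
        iteratedDerivWithin l f (Icc a b) y - (derivative^[l] r).eval y :=
    iteratedDerivWithin_sub_polynomial_eval (uniqueDiffOn_Icc hab) hy
      ((hf.of_le (by exact_mod_cast hl)) y hy) r
  have hends (l : ℕ) (hl : l ≤ m) :
      iteratedDerivWithin l (fun t => f t - r.eval t) (Icc a b) a = 0 ∧
        iteratedDerivWithin l (fun t => f t - r.eval t) (Icc a b) b = 0 := by
    rw [hg l (by omega) a (left_mem_Icc.2 hab.le), hg l (by omega) b (right_mem_Icc.2 hab.le),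
      hr, hr, eval_iterate_derivative_hermiteNode_left a b hl,
      eval_iterate_derivative_hermiteNode_right a b hl, (hmatch l hl).1, (hmatch l hl).2]
    simp
  obtain ⟨ξ, hξ, hξ0⟩ := exists_iteratedDerivWithin_two_mul_add_two_eq_zero hab
    (hf.sub (r.contDiff_eval _).contDiffOn) hends hx (by simp [r, K, hωx])
  rw [hg _ le_rfl ξ hξ, hr, iterate_derivative_eq_zero (by omega), iterate_derivative_hermiteNode,
    eval_natCast, eval_zero, zero_add, sub_eq_zero] at hξ0
  have hK : K = iteratedDerivWithin (2 * m + 2) f (Icc a b) ξ / (2 * m + 2).factorial := by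
    rw [hξ0, mul_div_cancel_right₀ _ (by positivity)]
  refine ⟨ξ, hξ, ?_⟩
  rw [← hK, ← eval_hermiteNode, div_mul_cancel₀ _ hωx]

theorem exists_hermite_error_eq (hab : a < b)
    (hf : ContDiffOn ℝ (2 * m + 2 : ℕ) f (Icc a b)) (hdeg : p.natDegree ≤ 2 * m + 1)
    (hmatch : ∀ l ≤ m, (derivative^[l] p).eval a = iteratedDerivWithin l f (Icc a b) a ∧
      (derivative^[l] p).eval b = iteratedDerivWithin l f (Icc a b) b)
    {x : ℝ} (hx : x ∈ Icc a b) :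
    ∃ ξ ∈ Icc a b, f x - p.eval x = iteratedDerivWithin (2 * m + 2) f (Icc a b) ξ /
      (2 * m + 2).factorial * ((x - a) * (x - b)) ^ (m + 1) := by
  rcases eq_or_ne ((x - a) * (x - b)) 0 with hnode | hnode
  · have hfx : f x = p.eval x := by
      rcases mul_eq_zero.1 hnode with h | h <;> rw [sub_eq_zero.1 h]
      · simpa using (hmatch 0 m.zero_le).1.symm
      · simpa using (hmatch 0 m.zero_le).2.symm
    exact ⟨a, left_mem_Icc.2 hab.le, by simp [hnode, hfx]⟩
  · obtain ⟨hxa, hxb⟩ := mul_ne_zero_iff.1 hnode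
    exact exists_hermite_error_eq_of_mem_Ioo hab hf hdeg hmatch
      ⟨hx.1.lt_of_ne (sub_ne_zero.1 hxa).symm, hx.2.lt_of_ne (sub_ne_zero.1 hxb)⟩

end HermiteError

/-- The classical two-point Hermite interpolation error formula.
If f is C^(2m+2) on [a, b] and p is the (unique) polynomial of degree ≤ 2m+1
matching f and its first m derivatives at a and b, then for every x ∈ [a, b]
there is ξ ∈ [a, b] with
f(x) − p(x) = f^(2m+2)(ξ)/(2m+2)! · ((x−a)(x−b))^(m+1); in particular, for any
bound M on |f^(2m+2)| on [a, b],
|f(x) − p(x)| ≤ M (b−a)^(2m+2) / (4^(m+1) (2m+2)!). -/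
theorem hermite_interpolation_error
    (a b : ℝ) (hab : a < b) (m : ℕ) (f : ℝ → ℝ)
    (hf : ContDiffOn ℝ (2 * m + 2) f (Set.Icc a b))
    (p : Polynomial ℝ) (hdeg : p.natDegree ≤ 2 * m + 1)
    (hmatch : ∀ l ≤ m,
      (Polynomial.derivative^[l] p).eval a = iteratedDerivWithin l f (Set.Icc a b) a ∧
      (Polynomial.derivative^[l] p).eval b = iteratedDerivWithin l f (Set.Icc a b) b)
    (M : ℝ)
    (hM : ∀ ξ ∈ Set.Icc a b,
      |iteratedDerivWithin (2 * m + 2) f (Set.Icc a b) ξ| ≤ M) :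
    ∀ x ∈ Set.Icc a b,
      (∃ ξ ∈ Set.Icc a b,
        f x - p.eval x =
          iteratedDerivWithin (2 * m + 2) f (Set.Icc a b) ξ /
              (Nat.factorial (2 * m + 2)) *
            ((x - a) * (x - b)) ^ (m + 1)) ∧
      |f x - p.eval x| ≤
        M * (b - a) ^ (2 * m + 2) / (4 ^ (m + 1) * Nat.factorial (2 * m + 2)) := by
  intro x hx
  obtain ⟨ξ, hξ, herr⟩ := exists_hermite_error_eq hab (by exact_mod_cast hf) hdeg hmatch hx
  refine ⟨⟨ξ, hξ, herr⟩, ?_⟩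
  have hM0 : 0 ≤ M := (abs_nonneg _).trans (hM ξ hξ)
  calc |f x - p.eval x|
      = |iteratedDerivWithin (2 * m + 2) f (Icc a b) ξ| / (2 * m + 2).factorial *
          |(x - a) * (x - b)| ^ (m + 1) := by
        rw [herr, abs_mul, abs_div, abs_pow, Nat.abs_cast]
    _ ≤ M / (2 * m + 2).factorial * ((b - a) ^ 2 / 4) ^ (m + 1) := by
        gcongr
        exacts [hM ξ hξ, abs_sub_mul_sub_le_sq_div_four hx]
    _ = M * (b - a) ^ (2 * m + 2) / (4 ^ (m + 1) * (2 * m + 2).factorial) := by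
        rw [div_pow, ← pow_mul]
        ring
end

section
/- Let a be a real number, h > 0, and let f : ℝ → ℝ be 4-times continuously differentiable on [a, a + h], with M = sup_{t ∈ [a, a+h]} |f⁗(t)|. Then |∫_a^{a+h} f(t) dt − (h/6)·(f(a) + 4f(a + h/2) + f(a + h))| ≤ M·h⁵ / 2880. -/
/-!
Let `F` be a primitive of `f`, `c` the midpoint and `r` the half-length of the interval. The
Simpson defect `E(x) = F(c + x) - F(c - x) - (x/3)(f(c - x) + 4 f(c) + f(c + x))` vanishes at `0`
together with its first two derivatives, and its third derivative is
`-(x/3)(f'''(c + x) - f'''(c - x))`, which by the mean value theorem is at most `(2M/3) x²` in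
absolute value. Integrating this bound three times from `0` gives `|E(r)| ≤ M r⁵ / 90`, which is
`M h⁵ / 2880` for `h = 2r`.
-/

open Set Topology

section Growth

variable {E : Type*} [NormedAddCommGroup E] [NormedSpace ℝ E] {u u' : ℝ → E} {r C : ℝ} {k : ℕ}

theorem norm_le_of_norm_deriv_le_mul_pow (hu : ContinuousOn u (Icc 0 r)) (h0 : u 0 = 0)
    (hu' : ∀ x ∈ Ico 0 r, HasDerivAt u (u' x) x) (bound : ∀ x ∈ Ico 0 r, ‖u' x‖ ≤ C * x ^ k) :
    ∀ x ∈ Icc 0 r, ‖u x‖ ≤ C / (k + 1) * x ^ (k + 1) := by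
  have hB (x : ℝ) : HasDerivAt (fun x ↦ C / (k + 1) * x ^ (k + 1)) (C * x ^ k) x := by
    refine ((hasDerivAt_pow (k + 1) x).const_mul (C / (k + 1))).congr_deriv ?_
    push_cast
    field_simp
  exact image_norm_le_of_norm_deriv_right_le_deriv_boundary hu
    (fun x hx ↦ (hu' x hx).hasDerivWithinAt) (by simp [h0]) hB bound

theorem norm_le_of_norm_deriv_le_mul_pow_of_mem_Ico (h0 : u 0 = 0)
    (hu' : ∀ x ∈ Ico 0 r, HasDerivAt u (u' x) x) (bound : ∀ x ∈ Ico 0 r, ‖u' x‖ ≤ C * x ^ k) :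
    ∀ x ∈ Ico 0 r, ‖u x‖ ≤ C / (k + 1) * x ^ (k + 1) := by
  intro x hx
  have hsub : Icc 0 x ⊆ Ico 0 r := Icc_subset_Ico_right hx.2
  exact norm_le_of_norm_deriv_le_mul_pow
    (fun y hy ↦ (hu' y (hsub hy)).continuousAt.continuousWithinAt) h0
    (fun y hy ↦ hu' y (hsub (Ico_subset_Icc_self hy)))
    (fun y hy ↦ bound y (hsub (Ico_subset_Icc_self hy))) x (right_mem_Icc.2 hx.1)

end Growth

theorem ContDiffOn.hasDerivAt_iteratedDerivWithin {𝕜 F : Type*} [NontriviallyNormedField 𝕜]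
    [NormedAddCommGroup F] [NormedSpace 𝕜 F] {f : 𝕜 → F} {s : Set 𝕜} {n : WithTop ℕ∞} {m : ℕ}
    {x : 𝕜} (hf : ContDiffOn 𝕜 n f s) (hs : UniqueDiffOn 𝕜 s) (hmn : m < n) (hx : s ∈ 𝓝 x) :
    HasDerivAt (iteratedDerivWithin m f s) (iteratedDerivWithin (m + 1) f s x) x := by
  rw [iteratedDerivWithin_succ, derivWithin_of_mem_nhds hx]
  exact ((hf.differentiableOn_iteratedDerivWithin hmn hs x (mem_of_mem_nhds hx)).differentiableAt
    hx).hasDerivAt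

theorem ContinuousOn.hasDerivAt_intervalIntegral {E : Type*} [NormedAddCommGroup E]
    [NormedSpace ℝ E] [CompleteSpace E] {f : ℝ → E} {a b x : ℝ} (hf : ContinuousOn f (Icc a b))
    (hx : x ∈ Ioo a b) : HasDerivAt (fun u ↦ ∫ t in a..u, f t) (f x) x :=
  intervalIntegral.integral_hasDerivAt_right
    ((hf.mono (Icc_subset_Icc_right hx.2.le)).intervalIntegrable_of_Icc hx.1.le)
    ((hf.mono Ioo_subset_Icc_self).stronglyMeasurableAtFilter isOpen_Ioo x hx)
    (hf.continuousAt (Icc_mem_nhds hx.1 hx.2))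

theorem ContinuousOn.continuousOn_intervalIntegral {E : Type*} [NormedAddCommGroup E]
    [NormedSpace ℝ E] {f : ℝ → E} {a b : ℝ} (hf : ContinuousOn f (Icc a b)) (hab : a ≤ b) :
    ContinuousOn (fun u ↦ ∫ t in a..u, f t) (Icc a b) := by
  simpa only [uIcc_of_le hab] using
    intervalIntegral.continuousOn_primitive_interval (a := a) (b := b)
      (by rw [uIcc_of_le hab]; exact hf.integrableOn_Icc)

noncomputable def simpsonDefect (F f : ℝ → ℝ) (c x : ℝ) : ℝ :=
  F (c + x) - F (c - x) - x / 3 * (f (c - x) + 4 * f c + f (c + x))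

section SimpsonDefect

variable {F f f₁ f₂ f₃ : ℝ → ℝ} {c x : ℝ}

theorem hasDerivAt_simpsonDefect
    (hF_add : HasDerivAt F (f (c + x)) (c + x)) (hF_sub : HasDerivAt F (f (c - x)) (c - x))
    (hf_add : HasDerivAt f (f₁ (c + x)) (c + x)) (hf_sub : HasDerivAt f (f₁ (c - x)) (c - x)) :
    HasDerivAt (simpsonDefect F f c)
      (2 / 3 * (f (c + x) + f (c - x)) - 4 / 3 * f c - x / 3 * (f₁ (c + x) - f₁ (c - x))) x := by
  refine (((hF_add.comp_const_add c x).sub (hF_sub.comp_const_sub c x)).sub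
    (((hasDerivAt_id x).div_const 3).mul (((hf_sub.comp_const_sub c x).add_const (4 * f c)).add
      (hf_add.comp_const_add c x)))).congr_deriv ?_
  simp only [id, Pi.add_apply]
  ring

theorem hasDerivAt_simpsonDefect_deriv
    (hf_add : HasDerivAt f (f₁ (c + x)) (c + x)) (hf_sub : HasDerivAt f (f₁ (c - x)) (c - x))
    (hf₁_add : HasDerivAt f₁ (f₂ (c + x)) (c + x)) (hf₁_sub : HasDerivAt f₁ (f₂ (c - x)) (c - x)) :
    HasDerivAt
      (fun x ↦ 2 / 3 * (f (c + x) + f (c - x)) - 4 / 3 * f c - x / 3 * (f₁ (c + x) - f₁ (c - x)))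
      (1 / 3 * (f₁ (c + x) - f₁ (c - x)) - x / 3 * (f₂ (c + x) + f₂ (c - x))) x := by
  refine ((((hf_add.comp_const_add c x).add (hf_sub.comp_const_sub c x)).const_mul
    (2 / 3)).sub_const (4 / 3 * f c) |>.sub (((hasDerivAt_id x).div_const 3).mul
      ((hf₁_add.comp_const_add c x).sub (hf₁_sub.comp_const_sub c x)))).congr_deriv ?_
  simp only [id, Pi.sub_apply]
  ring

theorem hasDerivAt_simpsonDefect_deriv_deriv
    (hf₁_add : HasDerivAt f₁ (f₂ (c + x)) (c + x)) (hf₁_sub : HasDerivAt f₁ (f₂ (c - x)) (c - x))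
    (hf₂_add : HasDerivAt f₂ (f₃ (c + x)) (c + x)) (hf₂_sub : HasDerivAt f₂ (f₃ (c - x)) (c - x)) :
    HasDerivAt (fun x ↦ 1 / 3 * (f₁ (c + x) - f₁ (c - x)) - x / 3 * (f₂ (c + x) + f₂ (c - x)))
      (-(x / 3) * (f₃ (c + x) - f₃ (c - x))) x := by
  refine ((((hf₁_add.comp_const_add c x).sub (hf₁_sub.comp_const_sub c x)).const_mul (1 / 3)).sub
    (((hasDerivAt_id x).div_const 3).mul
      ((hf₂_add.comp_const_add c x).add (hf₂_sub.comp_const_sub c x)))).congr_deriv ?_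
  simp only [id, Pi.add_apply]
  ring

end SimpsonDefect

theorem continuousOn_simpsonDefect {F f : ℝ → ℝ} {c r : ℝ}
    (hF : ContinuousOn F (Icc (c - r) (c + r))) (hf : ContinuousOn f (Icc (c - r) (c + r))) :
    ContinuousOn (simpsonDefect F f c) (Icc 0 r) := by
  have h_add : MapsTo (c + ·) (Icc 0 r) (Icc (c - r) (c + r)) := fun x hx ↦
    ⟨by linarith [hx.1, hx.2], by linarith [hx.2]⟩
  have h_sub : MapsTo (c - ·) (Icc 0 r) (Icc (c - r) (c + r)) := fun x hx ↦
    ⟨by linarith [hx.2], by linarith [hx.1, hx.2]⟩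
  have hc_add := continuousOn_const.add continuousOn_id (s := Icc 0 r) (f := fun _ ↦ c)
  have hc_sub := continuousOn_const.sub continuousOn_id (s := Icc 0 r) (f := fun _ ↦ c)
  exact ((hF.comp hc_add h_add).sub (hF.comp hc_sub h_sub)).sub ((continuousOn_id.div_const 3).mul
    (((hf.comp hc_sub h_sub).add continuousOn_const).add (hf.comp hc_add h_add)))

theorem abs_simpsonDefect_le {F f f₁ f₂ f₃ f₄ : ℝ → ℝ} {c r M : ℝ} (hr : 0 ≤ r)
    (hF : ContinuousOn F (Icc (c - r) (c + r))) (hf : ContinuousOn f (Icc (c - r) (c + r)))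
    (hF' : ∀ y ∈ Ioo (c - r) (c + r), HasDerivAt F (f y) y)
    (hf' : ∀ y ∈ Ioo (c - r) (c + r), HasDerivAt f (f₁ y) y)
    (hf₁' : ∀ y ∈ Ioo (c - r) (c + r), HasDerivAt f₁ (f₂ y) y)
    (hf₂' : ∀ y ∈ Ioo (c - r) (c + r), HasDerivAt f₂ (f₃ y) y)
    (hf₃' : ∀ y ∈ Ioo (c - r) (c + r), HasDerivAt f₃ (f₄ y) y)
    (hf₄ : ∀ y ∈ Ioo (c - r) (c + r), |f₄ y| ≤ M) :
    |simpsonDefect F f c r| ≤ M / 90 * r ^ 5 := by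
  have add_mem (x : ℝ) (hx : x ∈ Ico 0 r) : c + x ∈ Ioo (c - r) (c + r) :=
    ⟨by linarith [hx.1, hx.2], by linarith [hx.2]⟩
  have sub_mem (x : ℝ) (hx : x ∈ Ico 0 r) : c - x ∈ Ioo (c - r) (c + r) :=
    ⟨by linarith [hx.2], by linarith [hx.1, hx.2]⟩
  have hf₃_sub (x : ℝ) (hx : x ∈ Ico 0 r) : |f₃ (c + x) - f₃ (c - x)| ≤ M * (2 * x) := by
    have := (convex_Ioo (c - r) (c + r)).norm_image_sub_le_of_norm_hasDerivWithin_le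
      (fun y hy ↦ (hf₃' y hy).hasDerivWithinAt) hf₄ (sub_mem x hx) (add_mem x hx)
    rwa [Real.norm_eq_abs, Real.norm_eq_abs, show c + x - (c - x) = 2 * x by ring,
      abs_of_nonneg (a := 2 * x) (by linarith [hx.1])] at this
  have h₂ := norm_le_of_norm_deriv_le_mul_pow_of_mem_Ico (C := 2 * M / 3) (by simp)
    (fun x hx ↦ hasDerivAt_simpsonDefect_deriv_deriv (hf₁' _ (add_mem x hx))
      (hf₁' _ (sub_mem x hx)) (hf₂' _ (add_mem x hx)) (hf₂' _ (sub_mem x hx)))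
    (fun x hx ↦ by
      rw [norm_mul, norm_neg, Real.norm_eq_abs, Real.norm_eq_abs,
        abs_of_nonneg (by linarith [hx.1])]
      calc x / 3 * |f₃ (c + x) - f₃ (c - x)| ≤ x / 3 * (M * (2 * x)) :=
            mul_le_mul_of_nonneg_left (hf₃_sub x hx) (by linarith [hx.1])
        _ = 2 * M / 3 * x ^ 2 := by ring)
  have h₁ := norm_le_of_norm_deriv_le_mul_pow_of_mem_Ico
    (by simp only [add_zero, sub_zero, zero_div, sub_self, mul_zero]; ring)
    (fun x hx ↦ hasDerivAt_simpsonDefect_deriv (hf' _ (add_mem x hx))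
      (hf' _ (sub_mem x hx)) (hf₁' _ (add_mem x hx)) (hf₁' _ (sub_mem x hx))) h₂
  have h₀ := norm_le_of_norm_deriv_le_mul_pow (continuousOn_simpsonDefect hF hf)
    (by simp [simpsonDefect])
    (fun x hx ↦ hasDerivAt_simpsonDefect (hF' _ (add_mem x hx))
      (hF' _ (sub_mem x hx)) (hf' _ (add_mem x hx)) (hf' _ (sub_mem x hx))) h₁ r ⟨hr, le_rfl⟩
  rw [Real.norm_eq_abs] at h₀
  convert h₀ using 2
  push_cast
  ring

theorem abs_sub_simpson_le {F f f₁ f₂ f₃ f₄ : ℝ → ℝ} {a b M : ℝ} (hab : a ≤ b)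
    (hF : ContinuousOn F (Icc a b)) (hf : ContinuousOn f (Icc a b))
    (hF' : ∀ y ∈ Ioo a b, HasDerivAt F (f y) y) (hf' : ∀ y ∈ Ioo a b, HasDerivAt f (f₁ y) y)
    (hf₁' : ∀ y ∈ Ioo a b, HasDerivAt f₁ (f₂ y) y) (hf₂' : ∀ y ∈ Ioo a b, HasDerivAt f₂ (f₃ y) y)
    (hf₃' : ∀ y ∈ Ioo a b, HasDerivAt f₃ (f₄ y) y) (hf₄ : ∀ y ∈ Ioo a b, |f₄ y| ≤ M) :
    |F b - F a - (b - a) / 6 * (f a + 4 * f ((a + b) / 2) + f b)| ≤ M * (b - a) ^ 5 / 2880 := by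
  obtain ⟨c, r, rfl, rfl⟩ : ∃ c r, a = c - r ∧ b = c + r :=
    ⟨(a + b) / 2, (b - a) / 2, by ring, by ring⟩
  have key := abs_simpsonDefect_le (by linarith) hF hf hF' hf' hf₁' hf₂' hf₃' hf₄
  rw [simpsonDefect] at key
  rw [show (c - r + (c + r)) / 2 = c by ring]
  convert key using 3 <;> ring

/-- One-step (local) error bound for Simpson's rule — equivalently,
the local truncation error of one step of the classical fourth-order Runge–Kutta
method applied to y′ = f(t): if f is C⁴ on [a, a+h] with |f⁗| ≤ M there, then
|∫_a^{a+h} f − (h/6)(f(a) + 4f(a+h/2) + f(a+h))| ≤ M h⁵ / 2880. -/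
theorem simpson_one_step_error
    (a h : ℝ) (hh : 0 < h) (f : ℝ → ℝ)
    (hf : ContDiffOn ℝ 4 f (Set.Icc a (a + h)))
    (M : ℝ)
    (hM : ∀ t ∈ Set.Icc a (a + h),
      |iteratedDerivWithin 4 f (Set.Icc a (a + h)) t| ≤ M) :
    |(∫ t in a..(a + h), f t)
        - (h / 6) * (f a + 4 * f (a + h / 2) + f (a + h))|
      ≤ M * h ^ 5 / 2880 := by
  set s := Icc a (a + h)
  have hs : UniqueDiffOn ℝ s := uniqueDiffOn_Icc (by linarith)
  have hderiv (m : ℕ) (hm : m < 4) (y : ℝ) (hy : y ∈ Ioo a (a + h)) :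
      HasDerivAt (iteratedDerivWithin m f s) (iteratedDerivWithin (m + 1) f s y) y :=
    hf.hasDerivAt_iteratedDerivWithin hs (by exact_mod_cast hm) (Icc_mem_nhds hy.1 hy.2)
  have key := abs_sub_simpson_le (F := fun u ↦ ∫ t in a..u, f t) (by linarith)
    (hf.continuousOn.continuousOn_intervalIntegral (by linarith))
    hf.continuousOn (fun y hy ↦ hf.continuousOn.hasDerivAt_intervalIntegral hy)
    (by simpa only [iteratedDerivWithin_zero] using hderiv 0 (by norm_num))
    (hderiv 1 (by norm_num)) (hderiv 2 (by norm_num)) (hderiv 3 (by norm_num))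
    (fun y hy ↦ hM y (Ioo_subset_Icc_self hy))
  simpa [show (a + (a + h)) / 2 = a + h / 2 by ring] using key
end

section
/- Let s ∈ (0, 1), let f₁, f₂ : ℝ → ℝ each be 4-times continuously differentiable on [0, 1] with f₁(s) = f₂(s) and f₁′(s) = f₂′(s), and define f : [0, 1] → ℝ by f(t) = f₁(t) for t ≤ s and f(t) = f₂(t) for t > s. Let N be a positive integer, h = 1/N, t_n = n·h, and define the composite Simpson sum S_N(f) = Σ_{n=0}^{N−1} (h/6)·(f(t_n) + 4f(t_n + h/2) + f(t_{n+1})). Then |∫_0^1 f(t) dt − S_N(f)| ≤ M·h⁴ / 2880 + K·h³, where M = max(sup_{[0,1]} |f₁⁗|, sup_{[0,1]} |f₂⁗|) and K = sup_{t ∈ [0,1]} |f₁″(t) − f₂″(t)|. -/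
/-
On a cell that does not contain `s`, `f` agrees with one of the smooth pieces and the classical
Simpson estimate `M h⁵ / 2880` applies. That estimate is proved for a primitive `F` of the
integrand by passing to its odd and even parts about the midpoint `m` of the cell: the remainder
`E t` of Simpson's rule on `[m - t, m + t]` vanishes to third order at `t = 0` and its third
derivative is `-(t / 3) (F⁽⁴⁾(m + t) - F⁽⁴⁾(m - t)) = O(M t²)`, so integrating three times gives
`M t⁵ / 90`. On the single cell containing `s`, `f - f₁` vanishes left of `s` and equals
`f₂ - f₁` right of it, which has a double zero at `s`; hence `|f - f₁| ≤ K h² / 2` there, and both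
the integral and the Simpson sum of `f - f₁` over that cell are at most `K h³ / 2`.
-/

open Set MeasureTheory intervalIntegral

noncomputable def simpsonRule (f : ℝ → ℝ) (a b : ℝ) : ℝ :=
  (b - a) / 6 * (f a + 4 * f ((a + b) / 2) + f b)

theorem abs_le_of_hasDerivWithinAt_of_abs_le_pow {F F' : ℝ → ℝ} {a b C : ℝ} {k : ℕ}
    (hF : ∀ x ∈ Icc a b, HasDerivWithinAt F (F' x) (Icc a b) x) (ha : F a = 0)
    (hF' : ∀ x ∈ Icc a b, |F' x| ≤ C * (x - a) ^ k) {x : ℝ} (hx : x ∈ Icc a b) :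
    |F x| ≤ C * (x - a) ^ (k + 1) / (k + 1) := by
  have hB : ∀ y, HasDerivAt (fun y => C * (y - a) ^ (k + 1) / (k + 1)) (C * (y - a) ^ k) y := by
    intro y
    refine (((hasDerivAt_pow (k + 1) (y - a)).comp_sub_const y a).const_mul C).div_const
      ((k : ℝ) + 1) |>.congr_deriv ?_
    push_cast
    field_simp
  refine image_norm_le_of_norm_deriv_right_le_deriv_boundary
    (fun y hy => (hF y hy).continuousWithinAt) (fun y hy => ?_) (by simp [ha]) hB
    (fun y hy => hF' y (Ico_subset_Icc_self hy)) hx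
  exact (hF y (Ico_subset_Icc_self hy)).mono_of_mem_nhdsWithin
    (Filter.mem_of_superset (Icc_mem_nhdsGE hy.2) (Icc_subset_Icc_left hy.1))

theorem ContDiffOn.hasDerivWithinAt_iteratedDerivWithin {𝕜 E : Type*} [NontriviallyNormedField 𝕜]
    [NormedAddCommGroup E] [NormedSpace 𝕜 E] {g : 𝕜 → E} {D : Set 𝕜} {n k : ℕ}
    (hg : ContDiffOn 𝕜 n g D) (hD : UniqueDiffOn 𝕜 D) (hk : k < n) {x : 𝕜} (hx : x ∈ D) :
    HasDerivWithinAt (iteratedDerivWithin k g D) (iteratedDerivWithin (k + 1) g D x) D x := by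
  rw [iteratedDerivWithin_succ]
  exact (hg.differentiableOn_iteratedDerivWithin (mod_cast hk) hD x hx).hasDerivWithinAt

theorem abs_le_of_eq_zero_of_derivWithin_eq_zero {φ : ℝ → ℝ} {D : Set ℝ} {s t K : ℝ}
    (hφ : ContDiffOn ℝ 2 φ D) (hD : UniqueDiffOn ℝ D) (hst : s ≤ t) (hsub : Icc s t ⊆ D)
    (h0 : φ s = 0) (h1 : derivWithin φ D s = 0)
    (hK : ∀ x ∈ Icc s t, |iteratedDerivWithin 2 φ D x| ≤ K) :
    |φ t| ≤ K * (t - s) ^ 2 / 2 := by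
  have hd : ∀ k < 2, ∀ x ∈ Icc s t, HasDerivWithinAt (iteratedDerivWithin k φ D)
      (iteratedDerivWithin (k + 1) φ D x) (Icc s t) x := fun k hk x hx =>
    (hφ.hasDerivWithinAt_iteratedDerivWithin hD hk (hsub hx)).mono hsub
  have hd1 : ∀ x ∈ Icc s t, |iteratedDerivWithin 1 φ D x| ≤ K * (x - s) ^ 1 := fun x hx => by
    simpa using abs_le_of_hasDerivWithinAt_of_abs_le_pow (k := 0) (hd 1 one_lt_two)
      (by rwa [iteratedDerivWithin_one]) (by simpa using hK) hx
  simpa [one_add_one_eq_two] using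
    abs_le_of_hasDerivWithinAt_of_abs_le_pow (hd 0 two_pos) (by simpa using h0) hd1 ⟨hst, le_rfl⟩

theorem abs_sub_le_of_eq_of_derivWithin_eq {f₁ f₂ : ℝ → ℝ} {D : Set ℝ} {s t K : ℝ}
    (hD : UniqueDiffOn ℝ D) (hst : s ≤ t) (hsub : Icc s t ⊆ D)
    (hf₁ : ContDiffOn ℝ 2 f₁ D) (hf₂ : ContDiffOn ℝ 2 f₂ D)
    (hval : f₁ s = f₂ s) (hval' : derivWithin f₁ D s = derivWithin f₂ D s)
    (hK : ∀ x ∈ Icc s t, |iteratedDerivWithin 2 f₁ D x - iteratedDerivWithin 2 f₂ D x| ≤ K) :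
    |f₂ t - f₁ t| ≤ K * (t - s) ^ 2 / 2 := by
  have hs : s ∈ D := hsub ⟨le_rfl, hst⟩
  refine abs_le_of_eq_zero_of_derivWithin_eq_zero (φ := f₂ - f₁) (hf₂.sub hf₁) hD hst hsub
    (by simp [hval]) ?_ fun x hx => ?_
  · rw [derivWithin_sub (hf₂.differentiableOn two_ne_zero s hs)
      (hf₁.differentiableOn two_ne_zero s hs), hval', sub_self]
  · rw [iteratedDerivWithin_sub (hsub hx) hD (hf₂ x (hsub hx)) (hf₁ x (hsub hx)), abs_sub_comm]
    exact hK x hx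

/- Applied to `W k t = F k (m + t) - (-1) ^ k * F k (m - t)` for a derivative chain `F`, the
expression `T / 3 * (W 1 T + 2 * W 1 0)` is Simpson's rule for `F 1` on `[m - T, m + T]`. -/
theorem abs_sub_simpson_le_of_symmetric_chain {W : ℕ → ℝ → ℝ} {T C : ℝ} (hT : 0 ≤ T)
    (hW : ∀ k < 4, ∀ t ∈ Icc 0 T, HasDerivWithinAt (W k) (W (k + 1) t) (Icc 0 T) t)
    (h0 : W 0 0 = 0) (h2 : W 2 0 = 0) (hC : ∀ t ∈ Icc 0 T, |W 4 t| ≤ C * t) :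
    |W 0 T - T / 3 * (W 1 T + 2 * W 1 0)| ≤ C * T ^ 5 / 180 := by
  have step : ∀ {E E' : ℝ → ℝ} {c : ℝ} {k : ℕ},
      (∀ t ∈ Icc 0 T, HasDerivWithinAt E (E' t) (Icc 0 T) t) → E 0 = 0 →
      (∀ t ∈ Icc 0 T, |E' t| ≤ c * t ^ k) → ∀ t ∈ Icc 0 T, |E t| ≤ c / (k + 1) * t ^ (k + 1) :=
    fun hE hE0 hE' t ht => by
      simpa [mul_div_right_comm] using
        abs_le_of_hasDerivWithinAt_of_abs_le_pow hE hE0 (by simpa using hE') ht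
  have hid : ∀ t, HasDerivWithinAt (fun t : ℝ => t / 3) (1 / 3) (Icc 0 T) t := fun t =>
    (hasDerivWithinAt_id t _).div_const 3
  have hE3 : ∀ t ∈ Icc 0 T, |-(t / 3 * W 4 t)| ≤ C / 3 * t ^ 2 := fun t ht => by
    rw [abs_neg, abs_mul, abs_of_nonneg (by linarith [ht.1] : 0 ≤ t / 3)]
    nlinarith [hC t ht, ht.1]
  have hE2 := step (E := fun t => W 2 t / 3 - t / 3 * W 3 t) (E' := fun t => -(t / 3 * W 4 t))
    (fun t ht => ((hW 2 (by norm_num) t ht).div_const 3).sub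
      ((hid t).mul (hW 3 (by norm_num) t ht)) |>.congr_deriv (by ring)) (by simp [h2]) hE3
  have hE1 := step (E := fun t => 2 / 3 * (W 1 t - W 1 0) - t / 3 * W 2 t)
    (E' := fun t => W 2 t / 3 - t / 3 * W 3 t)
    (fun t ht => (((hW 1 (by norm_num) t ht).sub_const (W 1 0)).const_mul (2 / 3)).sub
      ((hid t).mul (hW 2 (by norm_num) t ht)) |>.congr_deriv (by ring)) (by simp) hE2
  have hE0 := step (E := fun t => W 0 t - t / 3 * (W 1 t + 2 * W 1 0))
    (E' := fun t => 2 / 3 * (W 1 t - W 1 0) - t / 3 * W 2 t)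
    (fun t ht => (hW 0 (by norm_num) t ht).sub
      ((hid t).mul ((hW 1 (by norm_num) t ht).add_const (2 * W 1 0))) |>.congr_deriv (by ring))
    (by simp [h0]) hE1 T ⟨hT, le_rfl⟩
  convert hE0 using 1
  norm_num
  ring

theorem abs_sub_simpsonRule_le_of_hasDerivWithinAt {F : ℕ → ℝ → ℝ} {a b M : ℝ} (hab : a ≤ b)
    (hF : ∀ k < 5, ∀ x ∈ Icc a b, HasDerivWithinAt (F k) (F (k + 1) x) (Icc a b) x)
    (hM : ∀ x ∈ Icc a b, |F 5 x| ≤ M) :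
    |F 0 b - F 0 a - simpsonRule (F 1) a b| ≤ M * (b - a) ^ 5 / 2880 := by
  set m := (a + b) / 2
  set T := (b - a) / 2
  have hmem : ∀ t ∈ Icc 0 T, m + t ∈ Icc a b ∧ m - t ∈ Icc a b := fun t ht => by
    simp only [mem_Icc, m, T] at ht ⊢; constructor <;> constructor <;> linarith
  have hW : ∀ k < 4, ∀ t ∈ Icc 0 T,
      HasDerivWithinAt (fun t => F k (m + t) - (-1) ^ k * F k (m - t))
        (F (k + 1) (m + t) - (-1) ^ (k + 1) * F (k + 1) (m - t)) (Icc 0 T) t := by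
    intro k hk t ht
    have hp := (hF k (by omega) _ (hmem t ht).1).comp t ((hasDerivWithinAt_id t _).const_add m)
      fun u hu => (hmem u hu).1
    have hn := (hF k (by omega) _ (hmem t ht).2).comp t ((hasDerivWithinAt_id t _).const_sub m)
      fun u hu => (hmem u hu).2
    exact (hp.sub (hn.const_mul _)).congr_deriv (by
      simp only [mul_one, mul_neg, sub_neg_eq_add]; ring)
  have hC : ∀ t ∈ Icc 0 T, |F 4 (m + t) - (-1) ^ 4 * F 4 (m - t)| ≤ 2 * M * t := fun t ht => by
    have hmvt := (convex_Icc a b).norm_image_sub_le_of_norm_hasDerivWithin_le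
      (hF 4 (by norm_num)) hM (hmem t ht).2 (hmem t ht).1
    rw [Real.norm_eq_abs, Real.norm_eq_abs, show m + t - (m - t) = 2 * t by ring,
      abs_of_nonneg (by linarith [ht.1] : 0 ≤ 2 * t)] at hmvt
    rw [show ((-1 : ℝ)) ^ 4 = 1 by norm_num, one_mul]
    linarith
  have hb : m + T = b := by simp only [m, T]; ring
  have ha : m - T = a := by simp only [m, T]; ring
  have := abs_sub_simpson_le_of_symmetric_chain (by linarith : 0 ≤ T) hW (by simp) (by simp) hC
  simp only [add_zero, sub_zero, hb, ha] at this
  convert this using 1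
  · simp only [simpsonRule, m, T]; ring_nf
  · simp only [T]; ring

theorem ContinuousOn.hasDerivWithinAt_integral_Icc {E : Type*} [NormedAddCommGroup E]
    [NormedSpace ℝ E] [CompleteSpace E] {g : ℝ → E} {a b x : ℝ}
    (hg : ContinuousOn g (Icc a b)) (hx : x ∈ Icc a b) :
    HasDerivWithinAt (fun u => ∫ t in a..u, g t) (g x) (Icc a b) x := by
  have := Fact.mk hx
  exact integral_hasDerivWithinAt_right
    ((hg.mono (Icc_subset_Icc_right hx.2)).intervalIntegrable_of_Icc hx.1)
    (hg.stronglyMeasurableAtFilter_nhdsWithin measurableSet_Icc x) (hg x hx)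

theorem abs_integral_sub_simpsonRule_le {g : ℝ → ℝ} {D : Set ℝ} {a b M : ℝ} (hab : a ≤ b)
    (hD : UniqueDiffOn ℝ D) (hsub : Icc a b ⊆ D) (hg : ContDiffOn ℝ 4 g D)
    (hM : ∀ x ∈ Icc a b, |iteratedDerivWithin 4 g D x| ≤ M) :
    |(∫ x in a..b, g x) - simpsonRule g a b| ≤ M * (b - a) ^ 5 / 2880 := by
  have := abs_sub_simpsonRule_le_of_hasDerivWithinAt (M := M) hab
    (F := fun k => Nat.casesOn k (fun u => ∫ t in a..u, g t) fun j => iteratedDerivWithin j g D)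
    ?_ hM
  · simpa using this
  · rintro (_ | k) hk x hx
    · simpa using (hg.continuousOn.mono hsub).hasDerivWithinAt_integral_Icc hx
    · exact (hg.hasDerivWithinAt_iteratedDerivWithin (n := 4) hD (by omega) (hsub hx)).mono hsub

theorem integral_sub_simpsonRule_congr {f g : ℝ → ℝ} {a b : ℝ} (hab : a ≤ b)
    (h : EqOn f g (Icc a b)) :
    (∫ x in a..b, f x) - simpsonRule f a b = (∫ x in a..b, g x) - simpsonRule g a b := by
  have hm : (a + b) / 2 ∈ Icc a b := ⟨by linarith, by linarith⟩
  rw [integral_congr (by rwa [uIcc_of_le hab]), simpsonRule, simpsonRule,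
    h ⟨le_rfl, hab⟩, h hm, h ⟨hab, le_rfl⟩]

theorem abs_integral_sub_simpsonRule_sub_le {f g : ℝ → ℝ} {a b δ : ℝ} (hab : a ≤ b)
    (hf : IntervalIntegrable f volume a b) (hg : IntervalIntegrable g volume a b)
    (hδ : ∀ x ∈ Icc a b, |f x - g x| ≤ δ) :
    |(∫ x in a..b, f x) - simpsonRule f a b - ((∫ x in a..b, g x) - simpsonRule g a b)|
      ≤ 2 * δ * (b - a) := by
  have hint : |∫ x in a..b, f x - g x| ≤ δ * (b - a) := by
    have := norm_integral_le_of_norm_le_const (f := fun x => f x - g x)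
      fun x hx => hδ x (Ioc_subset_Icc_self (by rwa [uIoc_of_le hab] at hx))
    rwa [Real.norm_eq_abs, abs_of_nonneg (sub_nonneg.2 hab)] at this
  have hrule : |simpsonRule f a b - simpsonRule g a b| ≤ δ * (b - a) := by
    have hm : (a + b) / 2 ∈ Icc a b := ⟨by linarith, by linarith⟩
    set m := (a + b) / 2
    have := abs_add_three (f a - g a) (4 * (f m - g m)) (f b - g b)
    rw [abs_mul, abs_of_pos (by norm_num : (0:ℝ) < 4)] at this
    rw [simpsonRule, simpsonRule, ← mul_sub, abs_mul, abs_of_nonneg (by linarith : 0 ≤ (b - a) / 6),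
      show f a + 4 * f m + f b - (g a + 4 * g m + g b) = f a - g a + 4 * (f m - g m) + (f b - g b)
        by ring]
    calc _ ≤ (b - a) / 6 * (6 * δ) := by
          gcongr
          linarith [hδ a ⟨le_rfl, hab⟩, hδ m hm, hδ b ⟨hab, le_rfl⟩]
      _ = δ * (b - a) := by ring
  rw [integral_sub hf hg] at hint
  calc _ = |(∫ x in a..b, f x) - (∫ x in a..b, g x) - (simpsonRule f a b - simpsonRule g a b)| := by
        ring_nf
    _ ≤ _ := (abs_sub _ _).trans (by linarith)

theorem continuousOn_Icc_of_eqOn_of_eqOn {α β : Type*} [LinearOrder α] [TopologicalSpace α]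
    [OrderClosedTopology α] [TopologicalSpace β] {f f₁ f₂ : α → β} {a b s : α}
    (hs : s ∈ Icc a b) (hf₁ : ContinuousOn f₁ (Icc a s)) (hf₂ : ContinuousOn f₂ (Icc s b))
    (hfle : ∀ t ∈ Icc a b, t ≤ s → f t = f₁ t) (hfge : ∀ t ∈ Icc a b, s ≤ t → f t = f₂ t) :
    ContinuousOn f (Icc a b) := by
  rw [← Icc_union_Icc_eq_Icc hs.1 hs.2]
  exact (hf₁.congr fun t ht => hfle t ⟨ht.1, ht.2.trans hs.2⟩ ht.2).union_of_isClosed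
    (hf₂.congr fun t ht => hfge t ⟨hs.1.trans ht.1, ht.2⟩ ht.1) isClosed_Icc isClosed_Icc

theorem abs_integral_sub_simpsonRule_piecewise_le {f f₁ f₂ : ℝ → ℝ} {D : Set ℝ}
    {a b s M K : ℝ} (hab : a ≤ b) (hD : UniqueDiffOn ℝ D) (hsub : Icc a b ⊆ D)
    (hf₁ : ContDiffOn ℝ 4 f₁ D) (hf₂ : ContDiffOn ℝ 4 f₂ D)
    (hval' : derivWithin f₁ D s = derivWithin f₂ D s)
    (hfle : ∀ t ∈ D, t ≤ s → f t = f₁ t) (hfge : ∀ t ∈ D, s ≤ t → f t = f₂ t)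
    (hM₁ : ∀ t ∈ D, |iteratedDerivWithin 4 f₁ D t| ≤ M)
    (hM₂ : ∀ t ∈ D, |iteratedDerivWithin 4 f₂ D t| ≤ M)
    (hK : ∀ t ∈ D, |iteratedDerivWithin 2 f₁ D t - iteratedDerivWithin 2 f₂ D t| ≤ K) :
    |(∫ t in a..b, f t) - simpsonRule f a b|
      ≤ M * (b - a) ^ 5 / 2880 + if s ∈ Ioo a b then K * (b - a) ^ 3 else 0 := by
  split_ifs with hs
  · have hs' : s ∈ Icc a b := Ioo_subset_Icc_self hs
    have hK0 : 0 ≤ K := (abs_nonneg _).trans (hK s (hsub hs'))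
    have hfc : ContinuousOn f (Icc a b) := continuousOn_Icc_of_eqOn_of_eqOn hs'
      (hf₁.continuousOn.mono ((Icc_subset_Icc_right hs'.2).trans hsub))
      (hf₂.continuousOn.mono ((Icc_subset_Icc_left hs'.1).trans hsub))
      (fun t ht => hfle t (hsub ht)) fun t ht => hfge t (hsub ht)
    have hclose : ∀ t ∈ Icc a b, |f t - f₁ t| ≤ K * (b - a) ^ 2 / 2 := by
      intro t ht
      rcases le_total t s with hts | hst
      · rw [hfle t (hsub ht) hts, sub_self, abs_zero]
        positivity
      · have hst' : Icc s t ⊆ D := (Icc_subset_Icc hs'.1 ht.2).trans hsub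
        rw [hfge t (hsub ht) hst]
        calc _ ≤ K * (t - s) ^ 2 / 2 :=
              abs_sub_le_of_eq_of_derivWithin_eq hD hst hst' (hf₁.of_le (by norm_num))
                (hf₂.of_le (by norm_num)) ((hfle s (hsub hs') le_rfl).symm.trans
                  (hfge s (hsub hs') le_rfl)) hval' fun x hx => hK x (hst' hx)
          _ ≤ K * (b - a) ^ 2 / 2 := by gcongr <;> linarith [ht.2, hs'.1]
    have hpert := abs_integral_sub_simpsonRule_sub_le hab (hfc.intervalIntegrable_of_Icc hab)
      ((hf₁.continuousOn.mono hsub).intervalIntegrable_of_Icc hab) hclose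
    have hsmooth := abs_integral_sub_simpsonRule_le hab hD hsub hf₁ fun t ht => hM₁ t (hsub ht)
    have := abs_sub_abs_le_abs_sub ((∫ t in a..b, f t) - simpsonRule f a b)
      ((∫ t in a..b, f₁ t) - simpsonRule f₁ a b)
    linarith
  · rw [add_zero]
    rcases le_or_gt b s with hbs | hsb
    · rw [integral_sub_simpsonRule_congr hab fun t ht => hfle t (hsub ht) (ht.2.trans hbs)]
      exact abs_integral_sub_simpsonRule_le hab hD hsub hf₁ fun t ht => hM₁ t (hsub ht)
    · have has : s ≤ a := not_lt.1 fun has => hs ⟨has, hsb⟩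
      rw [integral_sub_simpsonRule_congr hab fun t ht => hfge t (hsub ht) (has.trans ht.1)]
      exact abs_integral_sub_simpsonRule_le hab hD hsub hf₂ fun t ht => hM₂ t (hsub ht)

theorem abs_integral_sub_sum_simpsonRule_le {f : ℝ → ℝ} {N : ℕ} {h : ℝ} {e : ℕ → ℝ}
    (hf : ∀ n < N, IntervalIntegrable f volume (n * h) ((n + 1) * h))
    (he : ∀ n < N,
      |(∫ x in n * h..(n + 1) * h, f x) - simpsonRule f (n * h) ((n + 1) * h)| ≤ e n) :
    |(∫ x in 0..N * h, f x) - ∑ n ∈ Finset.range N, simpsonRule f (n * h) ((n + 1) * h)|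
      ≤ ∑ n ∈ Finset.range N, e n := by
  have hsplit := sum_integral_adjacent_intervals (a := fun n : ℕ => n * h) (μ := volume)
    fun k hk => by simpa using hf k hk
  push_cast at hsplit
  rw [zero_mul] at hsplit
  rw [← hsplit, ← Finset.sum_sub_distrib]
  exact (Finset.abs_sum_le_sum_abs _ _).trans
    (Finset.sum_le_sum fun n hn => he n (Finset.mem_range.1 hn))

theorem sum_ite_mem_Ioo_le {N : ℕ} {h s c : ℝ} (hh : 0 < h) (hc : 0 ≤ c) :
    ∑ n ∈ Finset.range N, (if s ∈ Ioo (n * h) ((n + 1) * h) then c else 0) ≤ c := by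
  calc _ ≤ ∑ n ∈ Finset.range N, if ⌊s / h⌋₊ = n then c else 0 := by
        refine Finset.sum_le_sum fun n _ => ?_
        by_cases hs : s ∈ Ioo (n * h) ((n + 1) * h)
        · have hn : ⌊s / h⌋₊ = n := by
            rw [Nat.floor_eq_iff (div_nonneg ((by positivity : (0:ℝ) ≤ n * h).trans hs.1.le) hh.le),
              le_div_iff₀ hh, div_lt_iff₀ hh]
            exact ⟨hs.1.le, hs.2⟩
          simp [hs, hn]
        · simp only [hs, if_false]
          split_ifs <;> simp [hc]
    _ ≤ c := by
        rw [Finset.sum_ite_eq]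
        split_ifs <;> simp [hc]

/-- Composite Simpson's rule (equivalently, the fixed-step classical
RK4 solution of y′ = f(t), y(0) = 0 evaluated at t = 1) for a piecewise-C⁴
right-hand side with matching values and first derivatives at an arbitrary interior
breakpoint s: the error satisfies |∫₀¹ f − S_N(f)| ≤ M h⁴ / 2880 + K h³, where M
bounds the fourth derivatives of both pieces and K bounds the second-derivative
discontinuity |f₁″ − f₂″| on [0, 1]. -/
theorem composite_simpson_second_derivative_jump
    (s : ℝ) (hs : s ∈ Set.Ioo (0 : ℝ) 1)
    (f₁ f₂ : ℝ → ℝ)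
    (hf₁ : ContDiffOn ℝ 4 f₁ (Set.Icc 0 1))
    (hf₂ : ContDiffOn ℝ 4 f₂ (Set.Icc 0 1))
    (hval : f₁ s = f₂ s)
    (hval' : derivWithin f₁ (Set.Icc 0 1) s = derivWithin f₂ (Set.Icc 0 1) s)
    (f : ℝ → ℝ)
    (hfle : ∀ t ∈ Set.Icc (0 : ℝ) 1, t ≤ s → f t = f₁ t)
    (hfgt : ∀ t ∈ Set.Icc (0 : ℝ) 1, s < t → f t = f₂ t)
    (N : ℕ) (hN : 0 < N) (h : ℝ) (hh : h = 1 / N)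
    (M : ℝ)
    (hM₁ : ∀ t ∈ Set.Icc (0 : ℝ) 1,
      |iteratedDerivWithin 4 f₁ (Set.Icc 0 1) t| ≤ M)
    (hM₂ : ∀ t ∈ Set.Icc (0 : ℝ) 1,
      |iteratedDerivWithin 4 f₂ (Set.Icc 0 1) t| ≤ M)
    (K : ℝ)
    (hK : ∀ t ∈ Set.Icc (0 : ℝ) 1,
      |iteratedDerivWithin 2 f₁ (Set.Icc 0 1) t
        - iteratedDerivWithin 2 f₂ (Set.Icc 0 1) t| ≤ K) :
    |(∫ t in (0 : ℝ)..1, f t)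
        - ∑ n ∈ Finset.range N,
            (h / 6) * (f ((n : ℝ) * h) + 4 * f ((n : ℝ) * h + h / 2)
              + f (((n : ℝ) + 1) * h))|
      ≤ M * h ^ 4 / 2880 + K * h ^ 3 := by
  have hh0 : 0 < h := by rw [hh]; exact one_div_pos.2 (Nat.cast_pos.2 hN)
  have hNh : (N : ℝ) * h = 1 := by rw [hh]; field_simp
  have hs' : s ∈ Icc (0 : ℝ) 1 := Ioo_subset_Icc_self hs
  have hfge : ∀ t ∈ Icc (0 : ℝ) 1, s ≤ t → f t = f₂ t := fun t ht hst =>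
    hst.eq_or_lt.elim (fun hst => hst ▸ (hfle s hs' le_rfl).trans hval) (hfgt t ht)
  have hfc : ContinuousOn f (Icc 0 1) := continuousOn_Icc_of_eqOn_of_eqOn hs'
    (hf₁.continuousOn.mono (Icc_subset_Icc_right hs'.2))
    (hf₂.continuousOn.mono (Icc_subset_Icc_left hs'.1)) hfle hfge
  have hle : ∀ n : ℕ, (n : ℝ) * h ≤ (n + 1) * h := fun n => by nlinarith
  have hcell : ∀ n < N, Icc ((n : ℝ) * h) ((n + 1) * h) ⊆ Icc 0 1 := fun n hn =>
    Icc_subset_Icc (by positivity) (by nlinarith [(by exact_mod_cast hn : (n : ℝ) + 1 ≤ N)])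
  have hcomposite := abs_integral_sub_sum_simpsonRule_le
    (fun n hn => (hfc.mono (hcell n hn)).intervalIntegrable_of_Icc (hle n)) fun n hn => by
      simpa [show ((n : ℝ) + 1) * h - n * h = h by ring] using
        abs_integral_sub_simpsonRule_piecewise_le (hle n) (uniqueDiffOn_Icc one_pos) (hcell n hn)
          hf₁ hf₂ hval' hfle hfge hM₁ hM₂ hK
  have hjumps := sum_ite_mem_Ioo_le (N := N) (s := s) hh0
    (mul_nonneg ((abs_nonneg _).trans (hK s hs')) (pow_nonneg hh0.le 3))
  rw [hNh, Finset.sum_add_distrib, Finset.sum_const, Finset.card_range, nsmul_eq_mul] at hcomposite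
  have hrule : ∀ n : ℕ, h / 6 * (f (n * h) + 4 * f (n * h + h / 2) + f ((n + 1) * h))
      = simpsonRule f (n * h) ((n + 1) * h) := fun n => by
    rw [simpsonRule]; ring_nf
  simp only [hrule]
  calc _ ≤ _ := hcomposite
    _ ≤ N * (M * h ^ 5 / 2880) + K * h ^ 3 := add_le_add_right hjumps _
    _ = M * h ^ 4 / 2880 + K * h ^ 3 := by
      rw [show (N : ℝ) * (M * h ^ 5 / 2880) = N * h * (M * h ^ 4 / 2880) by ring, hNh, one_mul]
end
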